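/- arXiv:2302.01376 — 6 statements merged into one kernel-verified Lean document; each statement's English description precedes it below -/
import Mathlib

section
/- Let (X,d) be a metric space and K a nonempty compact subset of X. Then there exists a Borel measurable map Π_K : X → K such that d(Π_K(x), x) = dist(x, K) for every x ∈ X. -/
/-!
Fix a sequence `e` whose closure contains `K`. For each `x`, shrink `K` step by step: at step
`n`, intersect the current compact cell with `closedBall (e k) 2⁻ⁿ` for the least `k` for which
the new cell still contains a nearest point of `x`. By Cantor's intersection theorem the nearest
points in the nested cells have a common element `a`, and the centre chosen at step `n` lies
within `2⁻ⁿ` of `a`. For a compact cell `S`, "`S` contains a nearest point" means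
`S.Nonempty ∧ infDist x S ≤ infDist x K`, a measurable condition on `x`; since the indices chosen
so far take only countably many values, each centre is a measurable function of `x`, and so is
their pointwise limit.
-/

open Metric Filter Topology Set

theorem measurable_sInf_setOf {α : Type*} [MeasurableSpace α] {p : α → ℕ → Prop}
    (hp : ∀ k, MeasurableSet {x | p x k}) : Measurable fun x => sInf {k | p x k} := by
  classical
  have hex : ∀ x, ∃ k, p x k ∨ ∀ i, ¬ p x i := fun x =>
    (em (∃ i, p x i)).elim (fun ⟨i, hi⟩ => ⟨i, .inl hi⟩) fun h => ⟨0, .inr (not_exists.1 h)⟩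
  have hfind : (fun x => sInf {k | p x k}) = fun x => Nat.find (hex x) := by
    funext x
    by_cases h : ∃ i, p x i
    · rw [Nat.sInf_def (s := {k | p x k}) h]
      exact Nat.find_congr' fun {k} => by simp [h]
    · have hempty : {k | p x k} = ∅ := eq_empty_iff_forall_notMem.2 (not_exists.1 h)
      rw [hempty, Nat.sInf_empty, eq_comm, Nat.find_eq_zero]
      exact .inr (not_exists.1 h)
  rw [hfind]
  refine measurable_find hex fun k => ?_
  simp only [ofPred_or, ofPred_forall]
  exact (hp k).union (.iInter fun i => (hp i).compl)

theorem IsCompact.measurableSet_exists_dist_le {X : Type*} [MetricSpace X] [MeasurableSpace X]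
    [OpensMeasurableSpace X] {S : Set X} (hS : IsCompact S) {r : X → ℝ} (hr : Measurable r) :
    MeasurableSet {x | ∃ y ∈ S, dist x y ≤ r x} := by
  rcases S.eq_empty_or_nonempty with rfl | hne
  · simp
  have : {x | ∃ y ∈ S, dist x y ≤ r x} = {x | infDist x S ≤ r x} := by
    ext x
    refine ⟨fun ⟨y, hy, hxy⟩ => (infDist_le_dist_of_mem hy).trans hxy, fun hx => ?_⟩
    obtain ⟨y, hy, hxy⟩ := hS.exists_infDist_eq_dist hne x
    exact ⟨y, hy, hxy ▸ hx⟩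
  rw [this]
  exact measurableSet_le (continuous_infDist_pt S).measurable hr

noncomputable section

namespace NearestPointSelection

variable {X : Type*} [MetricSpace X] (K : Set X) (e : ℕ → X)

/-- Histories are stored newest index first, so the ball added at step `n` has radius `2⁻ⁿ`. -/
def cell : List ℕ → Set X
  | [] => K
  | k :: w => cell w ∩ closedBall (e k) ((1 / 2) ^ w.length)

def nextIdx (x : X) (w : List ℕ) : ℕ :=
  sInf {k | ∃ y ∈ cell K e (k :: w), dist x y ≤ infDist x K}

def history (x : X) : ℕ → List ℕ
  | 0 => []
  | n + 1 => nextIdx K e x (history x n) :: history x n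

def approx (x : X) (n : ℕ) : X :=
  e (nextIdx K e x (history K e x n))

variable {K}

theorem isCompact_cell (hK : IsCompact K) : ∀ w, IsCompact (cell K e w)
  | [] => hK
  | _ :: w => (isCompact_cell hK w).inter_right isClosed_closedBall

theorem cell_subset : ∀ {w}, cell K e w ⊆ K
  | [] => subset_rfl
  | _ :: _ => inter_subset_left.trans cell_subset

variable (K)

@[simp]
theorem length_history (x : X) (n : ℕ) : (history K e x n).length = n := by
  induction n with
  | zero => rfl
  | succ n ih => simp [history, ih]

theorem cell_history_succ (x : X) (n : ℕ) :
    cell K e (history K e x (n + 1)) =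
      cell K e (history K e x n) ∩ closedBall (approx K e x n) ((1 / 2) ^ n) := by
  simp [history, cell, approx]

variable {K e}

theorem exists_mem_cell_history (hK : IsCompact K) (hKe : K ⊆ closure (range e))
    (hne : K.Nonempty) (x : X) (n : ℕ) :
    ∃ y ∈ cell K e (history K e x n), dist x y ≤ infDist x K := by
  induction n with
  | zero =>
    obtain ⟨y, hy, hxy⟩ := hK.exists_infDist_eq_dist hne x
    exact ⟨y, hy, hxy.ge⟩
  | succ n ih =>
    obtain ⟨y, hy, hxy⟩ := ih
    -- a nearest point in the current cell lies within `2⁻ⁿ` of some `e k`, so `k` qualifies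
    have hgood :
        {k | ∃ y ∈ cell K e (k :: history K e x n), dist x y ≤ infDist x K}.Nonempty := by
      obtain ⟨k, hk⟩ :=
        mem_closure_range_iff.1 (hKe (cell_subset e hy)) ((1 / 2) ^ n) (by positivity)
      exact ⟨k, y, ⟨hy, by simpa [dist_comm] using hk.le⟩, hxy⟩
    exact Nat.sInf_mem hgood

theorem exists_tendsto_approx (hK : IsCompact K) (hKe : K ⊆ closure (range e))
    (hne : K.Nonempty) (x : X) :
    ∃ a ∈ K, dist a x = infDist x K ∧ Tendsto (approx K e x) atTop (𝓝 a) := by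
  set t : ℕ → Set X := fun n => cell K e (history K e x n) ∩ {y | dist x y ≤ infDist x K}
  have htcl : ∀ n, IsCompact (t n) := fun n =>
    (isCompact_cell e hK _).inter_right (isClosed_le (continuous_const.dist continuous_id)
      continuous_const)
  obtain ⟨a, ha⟩ := IsCompact.nonempty_iInter_of_sequence_nonempty_isCompact_isClosed t
    (fun n => inter_subset_inter_left _ <|
      (cell_history_succ K e x n).subset.trans inter_subset_left)
    (exists_mem_cell_history hK hKe hne x) (htcl 0) fun n => (htcl n).isClosed
  have hat : ∀ n, a ∈ t n := mem_iInter.1 ha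
  have haK : a ∈ K := cell_subset e (hat 0).1
  refine ⟨a, haK, ?_, ?_⟩
  · exact (dist_comm a x).trans <| le_antisymm (hat 0).2 (infDist_le_dist_of_mem haK)
  · refine tendsto_iff_dist_tendsto_zero.2 <| squeeze_zero (fun _ => dist_nonneg) (fun n => ?_)
      (tendsto_pow_atTop_nhds_zero_of_lt_one (r := (1 / 2 : ℝ)) (by norm_num) (by norm_num))
    have := ((cell_history_succ K e x n).subset (hat (n + 1)).1).2
    rwa [mem_closedBall, dist_comm] at this

section Measurability

variable [MeasurableSpace X] [OpensMeasurableSpace X]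

theorem measurable_nextIdx (hK : IsCompact K) (w : List ℕ) :
    Measurable fun x => nextIdx K e x w :=
  measurable_sInf_setOf fun k =>
    (isCompact_cell e hK (k :: w)).measurableSet_exists_dist_le
      (continuous_infDist_pt K).measurable

theorem measurableSet_history_eq (hK : IsCompact K) :
    ∀ n w, MeasurableSet {x | history K e x n = w}
  | 0, _ => .const ([] = _)
  | _ + 1, [] => by simp [history]
  | n + 1, k :: w => by
    have : {x | history K e x (n + 1) = k :: w} =
        {x | nextIdx K e x w = k} ∩ {x | history K e x n = w} := by
      ext x
      simp only [history, List.cons.injEq, mem_ofPred_eq, mem_inter_iff]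
      exact and_congr_left fun h => h ▸ Iff.rfl
    rw [this]
    exact (measurableSet_eq_fun (measurable_nextIdx hK _) measurable_const).inter
      (measurableSet_history_eq hK n w)

theorem measurable_approx (hK : IsCompact K) (n : ℕ) : Measurable fun x => approx K e x n := by
  refine measurable_from_top.comp (measurable_to_countable' fun k => ?_)
  have : (fun x => nextIdx K e x (history K e x n)) ⁻¹' {k} =
      ⋃ w, {x | history K e x n = w} ∩ (fun x => nextIdx K e x w) ⁻¹' {k} := by
    ext x; simp
  rw [this]
  exact .iUnion fun w =>
    (measurableSet_history_eq hK n w).inter (measurable_nextIdx hK w (measurableSet_singleton k))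

end Measurability

end NearestPointSelection

end

open NearestPointSelection

/-- For a nonempty compact subset `K` of a metric space `X`, there is a Borel measurable
map `Π_K : X → K` with `dist (Π_K x) x = infDist x K` for every `x`. -/
theorem stmt_0 {X : Type*} [MetricSpace X] [MeasurableSpace X] [BorelSpace X]
    (K : Set X) (hK : IsCompact K) (hne : K.Nonempty) :
    ∃ f : X → X, Measurable f ∧ (∀ x, f x ∈ K) ∧ ∀ x, dist (f x) x = Metric.infDist x K := by
  obtain ⟨D, hDc, hKD⟩ := hK.isSeparable
  obtain ⟨e, rfl⟩ := hDc.exists_eq_range (closure_nonempty_iff.1 (hne.mono hKD))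
  choose f hfK hfdist hftend using exists_tendsto_approx hK hKD hne
  exact ⟨f, measurable_of_tendsto_metrizable (measurable_approx hK) (tendsto_pi_nhds.2 hftend),
    hfK, hfdist⟩
end

section
/- Let (X,d) be a proper metric space (all closed balls are compact) and C ⊆ X a nonempty closed set. Then the map (x,K) ↦ dist(x, K ∩ C) from X × 𝔎(X) to [0,∞] (with the convention dist(x,∅) = +∞) is lower semicontinuous, where 𝔎(X) is the space of nonempty compact subsets of X with the Hausdorff metric. -/
open Filter Metric Set Topology TopologicalSpace
open scoped ENNReal

/-!
If `(xₙ, Kₙ) → (x, K)` and `dist(xₙ, Kₙ ∩ C) ≤ r < ∞`, pick nearest points `zₙ ∈ Kₙ ∩ C`.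
Their distance to `K` is at most the Hausdorff distance from `Kₙ` to `K`, so shadowing them by
nearest points of the compact set `K` yields a subsequence converging to some `w ∈ K`; since `C`
is closed, `w ∈ K ∩ C`, and `dist(x, w) ≤ r` in the limit. Hence the sublevel sets are
sequentially closed.
-/

theorem IsCompact.exists_edist_le_of_infEDist_le {α : Type*} [PseudoEMetricSpace α] {s : Set α}
    (hs : IsCompact s) {x : α} {r : ℝ≥0∞} (h : infEDist x s ≤ r) (hr : r ≠ ∞) :
    ∃ y ∈ s, edist x y ≤ r := by
  have hne : s.Nonempty :=
    nonempty_iff_ne_empty.2 fun he => hr <| top_le_iff.1 <| by rwa [he, infEDist_empty] at h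
  obtain ⟨y, hy, hxy⟩ := hs.exists_infEDist_eq_edist hne x
  exact ⟨y, hy, hxy ▸ h⟩

theorem IsCompact.exists_tendsto_subseq_of_tendsto_infEDist {α : Type*} [PseudoEMetricSpace α]
    {s : Set α} (hs : IsCompact s) (hne : s.Nonempty) {z : ℕ → α}
    (hz : Tendsto (fun n => infEDist (z n) s) atTop (𝓝 0)) :
    ∃ w ∈ s, ∃ φ : ℕ → ℕ, StrictMono φ ∧ Tendsto (z ∘ φ) atTop (𝓝 w) := by
  choose k hk hzk using fun n => hs.exists_infEDist_eq_edist hne (z n)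
  obtain ⟨w, hw, φ, hφ, hkw⟩ := hs.tendsto_subseq hk
  refine ⟨w, hw, φ, hφ, tendsto_iff_edist_tendsto_0.2 ?_⟩
  have hsum := (hz.comp hφ.tendsto_atTop).add (tendsto_iff_edist_tendsto_0.1 hkw)
  rw [add_zero] at hsum
  refine tendsto_of_tendsto_of_tendsto_of_le_of_le tendsto_const_nhds hsum
    (fun _ => zero_le) fun n => ?_
  calc edist (z (φ n)) w ≤ edist (z (φ n)) (k (φ n)) + edist (k (φ n)) w := edist_triangle _ _ _
    _ = infEDist (z (φ n)) s + edist (k (φ n)) w := by rw [hzk]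

theorem NonemptyCompacts.exists_tendsto_subseq_of_forall_mem {α : Type*} [EMetricSpace α]
    {K : ℕ → NonemptyCompacts α} {L : NonemptyCompacts α} (hK : Tendsto K atTop (𝓝 L))
    {z : ℕ → α} (hz : ∀ n, z n ∈ K n) :
    ∃ w ∈ L, ∃ φ : ℕ → ℕ, StrictMono φ ∧ Tendsto (z ∘ φ) atTop (𝓝 w) := by
  refine L.isCompact.exists_tendsto_subseq_of_tendsto_infEDist L.nonempty ?_
  exact tendsto_of_tendsto_of_tendsto_of_le_of_le tendsto_const_nhds
    (tendsto_iff_edist_tendsto_0.1 hK) (fun _ => zero_le)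
    fun n => infEDist_le_hausdorffEDist_of_mem (hz n)

theorem isSeqClosed_setOf_infEDist_inter_le {α : Type*} [EMetricSpace α] {C : Set α}
    (hC : IsClosed C) (r : ℝ≥0∞) :
    IsSeqClosed {p : α × NonemptyCompacts α | infEDist p.1 ((p.2 : Set α) ∩ C) ≤ r} := by
  intro q p hq hqp
  rcases eq_or_ne r ∞ with rfl | hr
  · exact (le_top : _ ≤ ∞)
  choose z hz hzq using fun n =>
    ((q n).2.isCompact.inter_right hC).exists_edist_le_of_infEDist_le (hq n) hr
  obtain ⟨w, hwK, φ, hφ, hzw⟩ := NonemptyCompacts.exists_tendsto_subseq_of_forall_mem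
    ((continuous_snd.tendsto p).comp hqp) fun n => (hz n).1
  have hwC : w ∈ C := hC.mem_of_tendsto hzw (.of_forall fun n => (hz (φ n)).2)
  have hx : Tendsto (fun n => (q (φ n)).1) atTop (𝓝 p.1) :=
    ((continuous_fst.tendsto p).comp hqp).comp hφ.tendsto_atTop
  calc infEDist p.1 ((p.2 : Set α) ∩ C) ≤ edist p.1 w := infEDist_le_edist_of_mem ⟨hwK, hwC⟩
    _ ≤ r := le_of_tendsto (hx.edist hzw) (.of_forall fun n => hzq (φ n))

theorem stmt_3_general {X : Type*} [MetricSpace X]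
    (C : Set X) (hC : IsClosed C) :
    LowerSemicontinuous (fun p : X × TopologicalSpace.NonemptyCompacts X =>
      EMetric.infEdist p.1 ((p.2 : Set X) ∩ C)) :=
  lowerSemicontinuous_iff_isClosed_preimage.2 fun r =>
    (isSeqClosed_setOf_infEDist_inter_le hC r).isClosed

/-- In a proper metric space, for a nonempty closed set `C`, the map
`(x,K) ↦ dist(x, K ∩ C)` (valued in `[0,∞]`, with `dist(x,∅) = ∞`) is lower
semicontinuous on `X × 𝔎(X)`, where `𝔎(X)` is the space of nonempty compact
subsets with the Hausdorff metric. -/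
theorem stmt_3 {X : Type*} [MetricSpace X] [ProperSpace X]
    (C : Set X) (hC : IsClosed C) (hne : C.Nonempty) :
    LowerSemicontinuous (fun p : X × TopologicalSpace.NonemptyCompacts X =>
      EMetric.infEdist p.1 ((p.2 : Set X) ∩ C)) :=
  stmt_3_general C hC
end

section
/- Let e ∈ ℝⁿ be a unit vector, 0 < σ < 1, and let γ : [a,b] → ℝⁿ be Lipschitz with a.e. derivative satisfying ⟨γ'(s), e⟩ ≥ (1 − σ²)|γ'(s)| for almost every s ∈ [a,b]. Then |γ(b) − γ(a) − (∫_a^b |γ'(s)| ds) · e| ≤ 3σ · Lip(γ) · (b − a). -/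
/-!
The fundamental theorem of calculus holds for Lipschitz curves (test against continuous linear
functionals and use the scalar version for absolutely continuous functions), so the vector to be
estimated is `∫ₐᵇ (γ' - ‖γ'‖ e)`. For `x` in the cone `(1 - σ²)‖x‖ ≤ ⟪x, e⟫` one has
`‖x - ‖x‖ e‖² = 2‖x‖² - 2‖x‖⟪x, e⟫ ≤ 2σ²‖x‖²`, and `‖γ'‖ ≤ Lip(γ)`, so the integrand has norm
at most `2σ Lip(γ)`.
-/

open MeasureTheory Set
open scoped RealInnerProductSpace NNReal Interval

lemma ae_mem_uIoc_imp_of_ae_mem_Ioo {p : ℝ → Prop} {a b : ℝ} (hab : a ≤ b)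
    (h : ∀ᵐ x, x ∈ Ioo a b → p x) : ∀ᵐ x, x ∈ Ι a b → p x := by
  rw [uIoc_of_le hab]
  filter_upwards [h, Measure.ae_ne volume b] with x hx hxb hmem
  exact hx ⟨hmem.1, hmem.2.lt_of_ne hxb⟩

namespace LipschitzOnWith

variable {E : Type*} [NormedAddCommGroup E] [NormedSpace ℝ E]
  {f f' : ℝ → E} {K : ℝ≥0} {a b : ℝ}

lemma ae_norm_le_of_ae_hasDerivAt (hf : LipschitzOnWith K f (Icc a b))
    (hf' : ∀ᵐ x, x ∈ Ioo a b → HasDerivAt f (f' x) x) :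
    ∀ᵐ x, x ∈ Ioo a b → ‖f' x‖ ≤ K := by
  filter_upwards [hf'] with x hx hmem
  exact (hx hmem).le_of_lipschitzOn (Icc_mem_nhds hmem.1 hmem.2) hf

variable [CompleteSpace E]

lemma intervalIntegrable_of_ae_hasDerivAt (hab : a ≤ b) (hf : LipschitzOnWith K f (Icc a b))
    (hf' : ∀ᵐ x, x ∈ Ioo a b → HasDerivAt f (f' x) x) :
    IntervalIntegrable f' volume a b := by
  have hderiv : ∀ᵐ x ∂volume.restrict (Ioo a b), deriv f x = f' x := by
    rw [ae_restrict_iff' measurableSet_Ioo]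
    filter_upwards [hf'] with x hx hmem using (hx hmem).deriv
  rw [intervalIntegrable_iff_integrableOn_Ioo_of_le hab]
  refine Integrable.mono' (integrableOn_const (C := (K : ℝ)) measure_Ioo_lt_top.ne)
    ((aestronglyMeasurable_deriv f _).congr hderiv) ?_
  rw [ae_restrict_iff' measurableSet_Ioo]
  exact hf.ae_norm_le_of_ae_hasDerivAt hf'

lemma integral_eq_sub_of_ae_hasDerivAt (hab : a ≤ b) (hf : LipschitzOnWith K f (Icc a b))
    (hf' : ∀ᵐ x, x ∈ Ioo a b → HasDerivAt f (f' x) x) :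
    ∫ x in a..b, f' x = f b - f a := by
  refine (SeparatingDual.eq_iff_forall_dual_eq (R := ℝ)).2 fun φ => ?_
  have hφf : LipschitzOnWith (‖φ‖₊ * K) (φ ∘ f) (uIcc a b) := by
    rw [uIcc_of_le hab]
    exact φ.lipschitz.comp_lipschitzOnWith hf
  have hderiv : ∀ᵐ x, x ∈ Ioo a b → deriv (φ ∘ f) x = φ (f' x) := by
    filter_upwards [hf'] with x hx hmem
    exact (φ.hasFDerivAt.comp_hasDerivAt x (hx hmem)).deriv
  rw [← φ.intervalIntegral_comp_comm (hf.intervalIntegrable_of_ae_hasDerivAt hab hf'), map_sub]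
  refine (intervalIntegral.integral_congr_ae ?_).trans
    hφf.absolutelyContinuousOnInterval.integral_deriv_eq_sub
  filter_upwards [ae_mem_uIoc_imp_of_ae_mem_Ioo hab hderiv] with x hx hmem
  exact (hx hmem).symm

end LipschitzOnWith

lemma norm_sub_norm_smul_le_of_inner_ge {F : Type*} [NormedAddCommGroup F]
    [InnerProductSpace ℝ F] {e x : F} (he : ‖e‖ = 1) {σ : ℝ} (hσ : 0 ≤ σ)
    (hx : (1 - σ ^ 2) * ‖x‖ ≤ ⟪x, e⟫) :
    ‖x - ‖x‖ • e‖ ≤ 2 * σ * ‖x‖ := by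
  have hsq : ‖x - ‖x‖ • e‖ ^ 2 = 2 * ‖x‖ ^ 2 - 2 * ‖x‖ * ⟪x, e⟫ := by
    rw [norm_sub_sq_real, real_inner_smul_right, norm_smul, Real.norm_of_nonneg (norm_nonneg x),
      he]
    ring
  refine le_of_sq_le_sq ?_ (by positivity)
  rw [hsq]
  nlinarith [mul_le_mul_of_nonneg_left hx (by positivity : (0 : ℝ) ≤ 2 * ‖x‖)]

theorem stmt_9_general {n : ℕ} (e : EuclideanSpace ℝ (Fin n)) (he : ‖e‖ = 1)
    (σ : ℝ) (hσ : 0 < σ) (a b : ℝ) (hab : a ≤ b)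
    (γ γ' : ℝ → EuclideanSpace ℝ (Fin n)) (L : ℝ≥0)
    (hlip : LipschitzOnWith L γ (Set.Icc a b))
    (hderiv : ∀ᵐ s ∂(volume : Measure ℝ), s ∈ Set.Icc a b →
      HasDerivAt γ (γ' s) s ∧ (1 - σ ^ 2) * ‖γ' s‖ ≤ ⟪γ' s, e⟫) :
    ‖γ b - γ a - (∫ s in a..b, ‖γ' s‖) • e‖ ≤ 3 * σ * (L : ℝ) * (b - a) := by
  have hγ' : ∀ᵐ s, s ∈ Ioo a b → HasDerivAt γ (γ' s) s := by
    filter_upwards [hderiv] with s hs hmem using (hs (Ioo_subset_Icc_self hmem)).1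
  have hint := hlip.intervalIntegrable_of_ae_hasDerivAt hab hγ'
  have hbound : ∀ᵐ s, s ∈ Ioo a b → ‖γ' s - ‖γ' s‖ • e‖ ≤ 3 * σ * L := by
    filter_upwards [hderiv, hlip.ae_norm_le_of_ae_hasDerivAt hγ'] with s hs hL hmem
    calc ‖γ' s - ‖γ' s‖ • e‖ ≤ 2 * σ * ‖γ' s‖ :=
          norm_sub_norm_smul_le_of_inner_ge he hσ.le (hs (Ioo_subset_Icc_self hmem)).2
      _ ≤ 3 * σ * L := by gcongr ?_ * _ * ?_; exacts [by norm_num, hL hmem]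
  rw [← hlip.integral_eq_sub_of_ae_hasDerivAt hab hγ', ← intervalIntegral.integral_smul_const,
    ← intervalIntegral.integral_sub hint
      ⟨hint.norm.1.smul_const e, hint.norm.2.smul_const e⟩]
  simpa [abs_of_nonneg (sub_nonneg.2 hab)] using
    intervalIntegral.norm_integral_le_of_norm_le_const_ae
      (ae_mem_uIoc_imp_of_ae_mem_Ioo hab hbound)

/-- Euclidean endpoint-drift: if `γ : [a,b] → ℝⁿ` is Lipschitz and its a.e. derivative
lies in the cone `C(e,σ)`, then
`|γ(b) − γ(a) − (∫ₐᵇ |γ'(s)| ds)·e| ≤ 3σ·Lip(γ)·(b−a)`. -/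
theorem stmt_9 {n : ℕ} (e : EuclideanSpace ℝ (Fin n)) (he : ‖e‖ = 1)
    (σ : ℝ) (hσ : 0 < σ) (hσ1 : σ < 1) (a b : ℝ) (hab : a ≤ b)
    (γ γ' : ℝ → EuclideanSpace ℝ (Fin n)) (L : ℝ≥0)
    (hlip : LipschitzOnWith L γ (Set.Icc a b))
    (hderiv : ∀ᵐ s ∂(volume : Measure ℝ), s ∈ Set.Icc a b →
      HasDerivAt γ (γ' s) s ∧ (1 - σ ^ 2) * ‖γ' s‖ ≤ ⟪γ' s, e⟫) :
    ‖γ b - γ a - (∫ s in a..b, ‖γ' s‖) • e‖ ≤ 3 * σ * (L : ℝ) * (b - a) :=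
  stmt_9_general e he σ hσ a b hab γ γ' L hlip hderiv
end

section
/- Let D ⊆ ℝ be a compact set, γ̄ : D → ℝⁿ a Lipschitz map whose (approximate) derivative γ̄'(t) exists and is nonzero for almost every t ∈ D, and let E ⊆ ℝⁿ be a set with H¹(E ∩ γ̄(D)) = 0 (H¹ the 1-dimensional Hausdorff measure). Then the Lebesgue measure of γ̄⁻¹(E) is zero. -/
/-!
At a point `t` where `γ'(t) ≠ 0` the curve expands distances from `t` by at least any
`c < ‖γ'(t)‖` at small scales `r`. Taking `c` and `r` of the form `1 / (m + 1)` covers almost all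
of `D` by countably many sets `expandingSet γ D c r`; on each piece of diameter `< r` the curve
has a Lipschitz inverse, so the Lebesgue measure of the part mapped into `E` is bounded by a
multiple of `H¹(E ∩ γ(D)) = 0`.
-/

open MeasureTheory Metric Set
open scoped NNReal ENNReal

theorem hausdorffMeasure_le_of_antilipschitzWith_domRestrict {X Y : Type*} [EMetricSpace X]
    [MeasurableSpace X] [BorelSpace X] [EMetricSpace Y] [MeasurableSpace Y] [BorelSpace Y]
    {f : X → Y} {s : Set X} {K : ℝ≥0} (hf : AntilipschitzWith K (s.domRestrict f)) {d : ℝ}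
    (hd : 0 ≤ d) : μH[d] s ≤ (K : ℝ≥0∞) ^ d * μH[d] (f '' s) :=
  calc μH[d] s = μH[d] (univ : Set s) := by
        rw [← (isometry_subtype_coe (s := s)).hausdorffMeasure_image (Or.inl hd), image_univ,
          Subtype.range_coe]
    _ ≤ (K : ℝ≥0∞) ^ d * μH[d] (s.domRestrict f '' univ) := hf.le_hausdorffMeasure_image hd _
    _ = (K : ℝ≥0∞) ^ d * μH[d] (f '' s) := by rw [image_univ, range_domRestrict]

theorem volume_eq_zero_of_antilipschitzWith_domRestrict {Y : Type*} [EMetricSpace Y]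
    [MeasurableSpace Y] [BorelSpace Y] {f : ℝ → Y} {s : Set ℝ} {K : ℝ≥0}
    (hf : AntilipschitzWith K (s.domRestrict f)) (h : μH[1] (f '' s) = 0) : volume s = 0 := by
  rw [← hausdorffMeasure_real]
  exact nonpos_iff_eq_zero.1 <|
    (hausdorffMeasure_le_of_antilipschitzWith_domRestrict hf zero_le_one).trans_eq (by simp [h])

def expandingSet {Y : Type*} [PseudoMetricSpace Y] (γ : ℝ → Y) (D : Set ℝ) (c r : ℝ) :
    Set ℝ :=
  {t ∈ D | ∀ s ∈ D, dist s t < r → c * dist s t ≤ dist (γ s) (γ t)}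

section expandingSet

variable {Y : Type*} {γ : ℝ → Y} {D : Set ℝ} {c r : ℝ}

theorem expandingSet_anti [PseudoMetricSpace Y] {r' : ℝ} (hr : r' ≤ r) :
    expandingSet γ D c r ⊆ expandingSet γ D c r' :=
  fun _ ⟨htD, ht⟩ => ⟨htD, fun s hs hst => ht s hs (hst.trans_le hr)⟩

theorem antilipschitzWith_domRestrict_of_subset_expandingSet [PseudoMetricSpace Y]
    {A : Set ℝ} (hc : 0 < c) (hA : A ⊆ expandingSet γ D c r)
    (hAr : ∀ s ∈ A, ∀ t ∈ A, dist s t < r) :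
    AntilipschitzWith (Real.toNNReal c)⁻¹ (A.domRestrict γ) := by
  refine AntilipschitzWith.of_le_mul_dist fun s t => ?_
  rw [NNReal.coe_inv, Real.coe_toNNReal _ hc.le, inv_mul_eq_div, le_div_iff₀' hc]
  exact (hA t.2).2 s (hA s.2).1 (hAr s s.2 t t.2)

theorem volume_expandingSet_inter_preimage_eq_zero [MetricSpace Y] [MeasurableSpace Y]
    [BorelSpace Y] (hc : 0 < c) (hr : 0 < r) {E : Set Y} (hE : μH[1] (E ∩ γ '' D) = 0) :
    volume (expandingSet γ D c r ∩ γ ⁻¹' E) = 0 := by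
  refine measure_null_of_locally_null _ fun t _ =>
    ⟨_, inter_mem_nhdsWithin _ (ball_mem_nhds t (half_pos hr)), ?_⟩
  have hsmall : ∀ s ∈ expandingSet γ D c r ∩ γ ⁻¹' E ∩ ball t (r / 2),
      ∀ u ∈ expandingSet γ D c r ∩ γ ⁻¹' E ∩ ball t (r / 2), dist s u < r := by
    intro s hs u hu
    calc dist s u ≤ dist s t + dist u t := dist_triangle_right s u t
      _ < r / 2 + r / 2 := add_lt_add hs.2 hu.2
      _ = r := add_halves r
  have himage : γ '' (expandingSet γ D c r ∩ γ ⁻¹' E ∩ ball t (r / 2)) ⊆ E ∩ γ '' D := by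
    rintro _ ⟨s, ⟨⟨hsD, hsE⟩, -⟩, rfl⟩
    exact ⟨hsE, s, hsD.1, rfl⟩
  exact volume_eq_zero_of_antilipschitzWith_domRestrict
    (antilipschitzWith_domRestrict_of_subset_expandingSet hc (fun s hs => hs.1.1) hsmall)
    (measure_mono_null himage hE)

theorem HasDerivWithinAt.exists_mem_expandingSet [NormedAddCommGroup Y] [NormedSpace ℝ Y]
    {v : Y} {t : ℝ} (hγ : HasDerivWithinAt γ v D t) (ht : t ∈ D) (hc : c < ‖v‖) :
    ∃ r > 0, t ∈ expandingSet γ D c r := by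
  obtain ⟨r, hr, hball⟩ :=
    mem_nhdsWithin_iff.1 ((hasDerivWithinAt_iff_isLittleO.1 hγ).def (sub_pos.2 hc))
  refine ⟨r, hr, ht, fun s hs hst => ?_⟩
  have happrox : ‖γ s - γ t - (s - t) • v‖ ≤ (‖v‖ - c) * ‖s - t‖ := hball ⟨hst, hs⟩
  rw [dist_eq_norm, dist_eq_norm]
  calc c * ‖s - t‖ = ‖(s - t) • v‖ - (‖v‖ - c) * ‖s - t‖ := by rw [norm_smul]; ring
    _ ≤ ‖(s - t) • v‖ - ‖γ s - γ t - (s - t) • v‖ := by gcongr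
    _ ≤ ‖γ s - γ t‖ := by
      rw [sub_le_iff_le_add, norm_sub_rev (γ s - γ t)]
      exact norm_le_norm_add_norm_sub' ((s - t) • v) (γ s - γ t)

end expandingSet

theorem stmt_10_general {n : ℕ} (D : Set ℝ)
    (γ γ' : ℝ → EuclideanSpace ℝ (Fin n))
    (hderiv : ∀ᵐ t ∂((volume : Measure ℝ).restrict D),
      HasDerivWithinAt γ (γ' t) D t ∧ γ' t ≠ 0)
    (E : Set (EuclideanSpace ℝ (Fin n))) (hE : μH[1] (E ∩ γ '' D) = 0) :
    volume (D ∩ γ ⁻¹' E) = 0 := by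
  have hbad : volume ({t | ¬(HasDerivWithinAt γ (γ' t) D t ∧ γ' t ≠ 0)} ∩ D) = 0 :=
    Measure.measure_inter_eq_zero_of_restrict (ae_iff.1 hderiv)
  have hcover : D ∩ γ ⁻¹' E ⊆ {t | ¬(HasDerivWithinAt γ (γ' t) D t ∧ γ' t ≠ 0)} ∩ D ∪
      ⋃ m : ℕ, ⋃ k : ℕ, expandingSet γ D (1 / (m + 1)) (1 / (k + 1)) ∩ γ ⁻¹' E := by
    rintro t ⟨htD, htE⟩
    by_cases hgood : HasDerivWithinAt γ (γ' t) D t ∧ γ' t ≠ 0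
    · obtain ⟨m, hm⟩ := exists_nat_one_div_lt (norm_pos_iff.2 hgood.2)
      obtain ⟨r, hr, htr⟩ := hgood.1.exists_mem_expandingSet htD hm
      obtain ⟨k, hk⟩ := exists_nat_one_div_lt hr
      exact Or.inr (mem_iUnion₂.2 ⟨m, k, expandingSet_anti hk.le htr, htE⟩)
    · exact Or.inl ⟨hgood, htD⟩
  exact measure_mono_null hcover <| measure_union_null hbad <| measure_iUnion_null fun m =>
    measure_iUnion_null fun k => volume_expandingSet_inter_preimage_eq_zero
      Nat.one_div_pos_of_nat Nat.one_div_pos_of_nat hE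

/-- If `γ` is a Lipschitz curve whose (approximate) derivative exists and is nonzero at
almost every point of a compact set `D ⊆ ℝ`, and `E ⊆ ℝⁿ` satisfies
`H¹(E ∩ γ(D)) = 0`, then `L¹(D ∩ γ⁻¹(E)) = 0`. -/
theorem stmt_10 {n : ℕ} (D : Set ℝ) (hD : IsCompact D)
    (γ γ' : ℝ → EuclideanSpace ℝ (Fin n)) (L : ℝ≥0) (hlip : LipschitzWith L γ)
    (hderiv : ∀ᵐ t ∂((volume : Measure ℝ).restrict D),
      HasDerivWithinAt γ (γ' t) D t ∧ γ' t ≠ 0)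
    (E : Set (EuclideanSpace ℝ (Fin n))) (hE : μH[1] (E ∩ γ '' D) = 0) :
    volume (D ∩ γ ⁻¹' E) = 0 :=
  stmt_10_general D γ γ' hderiv E hE
end

section
/- Let (X,d) be a metric space and let γ₁ : D₁ → X and γ₂ : D₂ → X be maps defined on compact subsets of ℝ satisfying (1/2)|s−t| ≤ d(γ_i(s),γ_i(t)) ≤ 2|s−t| for all s,t in their domains. Identify each γ_i with its graph in ℝ × X, and suppose the Hausdorff distance between graph(γ₁) and graph(γ₂) (with respect to the product metric on ℝ × X, using the max of the component distances) is less than ε. If x = γ₁(t₁) and y = γ₂(t₂) with d(x,y) < δ, then |t₁ − t₂| ≤ 2δ + 3ε. -/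
/-!
Let `(s, γ₂ s)` be a point of the second graph within `ε` of `(t₁, γ₁ t₁)`. It exists because
both graphs are compact: their Hausdorff edistance is then finite, so `hausdorffDist` (which is
`0` for an infinite edistance) really bounds nearest-point distances. Then `|t₁ - s| < ε`,
and `d(γ₂ s, γ₂ t₂) < ε + δ` by the triangle inequality through `γ₁ t₁`, so the lower biLipschitz
bound gives `|s - t₂| < 2ε + 2δ`.
-/

open Metric Set

lemma setOf_fst_mem_and_snd_eq {α β : Type*} (s : Set α) (f : α → β) :
    {p : α × β | p.1 ∈ s ∧ p.2 = f p.1} = s.graphOn f := by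
  ext p
  simp [eq_comm]

lemma IsCompact.graphOn {α β : Type*} [TopologicalSpace α] [TopologicalSpace β]
    {s : Set α} {f : α → β} (hs : IsCompact s) (hf : ContinuousOn f s) :
    IsCompact (s.graphOn f) :=
  hs.image_of_continuousOn (continuousOn_id.prodMk hf)

lemma Metric.exists_dist_lt_of_hausdorffDist_lt_of_isCompact {α : Type*} [PseudoMetricSpace α]
    {A B : Set α} (hA : IsCompact A) (hB : IsCompact B) (hBne : B.Nonempty) {x : α} (hx : x ∈ A)
    {r : ℝ} (hr : hausdorffDist A B < r) : ∃ y ∈ B, dist x y < r :=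
  exists_dist_lt_of_hausdorffDist_lt hx hr <|
    hausdorffEDist_ne_top_of_nonempty_of_bounded ⟨x, hx⟩ hBne hA.isBounded hB.isBounded

lemma continuousOn_of_dist_le_mul_abs_sub {X : Type*} [PseudoMetricSpace X] {D : Set ℝ}
    {γ : ℝ → X} {K : ℝ} (h : ∀ s ∈ D, ∀ t ∈ D, dist (γ s) (γ t) ≤ K * |s - t|) :
    ContinuousOn γ D :=
  LipschitzOnWith.continuousOn (K := K.toNNReal) <| LipschitzOnWith.of_dist_le_mul fun s hs t ht =>
    (h s hs t ht).trans (mul_le_mul_of_nonneg_right K.le_coe_toNNReal (abs_nonneg _))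

theorem stmt_13_general {X : Type*} [MetricSpace X] (D₁ D₂ : Set ℝ)
    (hD₁ : IsCompact D₁) (hD₂ : IsCompact D₂) (γ₁ γ₂ : ℝ → X)
    (h₁ : ∀ s ∈ D₁, ∀ t ∈ D₁,
      (1 / 2) * |s - t| ≤ dist (γ₁ s) (γ₁ t) ∧ dist (γ₁ s) (γ₁ t) ≤ 2 * |s - t|)
    (h₂ : ∀ s ∈ D₂, ∀ t ∈ D₂,
      (1 / 2) * |s - t| ≤ dist (γ₂ s) (γ₂ t) ∧ dist (γ₂ s) (γ₂ t) ≤ 2 * |s - t|)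
    (ε δ : ℝ)
    (hH : Metric.hausdorffDist {p : ℝ × X | p.1 ∈ D₁ ∧ p.2 = γ₁ p.1}
      {p : ℝ × X | p.1 ∈ D₂ ∧ p.2 = γ₂ p.1} < ε)
    (t₁ t₂ : ℝ) (ht₁ : t₁ ∈ D₁) (ht₂ : t₂ ∈ D₂)
    (hd : dist (γ₁ t₁) (γ₂ t₂) < δ) :
    |t₁ - t₂| ≤ 2 * δ + 3 * ε := by
  rw [setOf_fst_mem_and_snd_eq, setOf_fst_mem_and_snd_eq] at hH
  have hG₁ := hD₁.graphOn (continuousOn_of_dist_le_mul_abs_sub fun s hs t ht => (h₁ s hs t ht).2)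
  have hG₂ := hD₂.graphOn (continuousOn_of_dist_le_mul_abs_sub fun s hs t ht => (h₂ s hs t ht).2)
  obtain ⟨_, ⟨s, hs, rfl⟩, hclose⟩ := exists_dist_lt_of_hausdorffDist_lt_of_isCompact hG₁ hG₂
    ⟨_, mem_image_of_mem _ ht₂⟩ (mem_image_of_mem _ ht₁) hH
  rw [Prod.dist_eq, max_lt_iff, Real.dist_eq] at hclose
  have hγ₂ : dist (γ₂ s) (γ₂ t₂) < ε + δ := by
    linarith [dist_triangle (γ₂ s) (γ₁ t₁) (γ₂ t₂), dist_comm (γ₂ s) (γ₁ t₁)]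
  linarith [abs_sub_le t₁ s t₂, (h₂ s hs t₂ ht₂).1]

/-- If two 2-biLipschitz fragments have graphs at Hausdorff distance `< ε` (in `ℝ × X`
with the sup product metric) and `x = γ₁(t₁)`, `y = γ₂(t₂)` satisfy `d(x,y) < δ`, then
`|t₁ − t₂| ≤ 2δ + 3ε`. -/
theorem stmt_13 {X : Type*} [MetricSpace X] (D₁ D₂ : Set ℝ)
    (hD₁ : IsCompact D₁) (hD₂ : IsCompact D₂) (γ₁ γ₂ : ℝ → X)
    (h₁ : ∀ s ∈ D₁, ∀ t ∈ D₁,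
      (1 / 2) * |s - t| ≤ dist (γ₁ s) (γ₁ t) ∧ dist (γ₁ s) (γ₁ t) ≤ 2 * |s - t|)
    (h₂ : ∀ s ∈ D₂, ∀ t ∈ D₂,
      (1 / 2) * |s - t| ≤ dist (γ₂ s) (γ₂ t) ∧ dist (γ₂ s) (γ₂ t) ≤ 2 * |s - t|)
    (ε δ : ℝ) (hε : 0 < ε) (hδ : 0 < δ)
    (hH : Metric.hausdorffDist {p : ℝ × X | p.1 ∈ D₁ ∧ p.2 = γ₁ p.1}
      {p : ℝ × X | p.1 ∈ D₂ ∧ p.2 = γ₂ p.1} < ε)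
    (t₁ t₂ : ℝ) (ht₁ : t₁ ∈ D₁) (ht₂ : t₂ ∈ D₂)
    (hd : dist (γ₁ t₁) (γ₂ t₂) < δ) :
    |t₁ - t₂| ≤ 2 * δ + 3 * ε :=
  stmt_13_general D₁ D₂ hD₁ hD₂ γ₁ γ₂ h₁ h₂ ε δ hH t₁ t₂ ht₁ ht₂ hd
end

section
/- Let (X,d) be a complete separable metric space, Γ the set of 2-biLipschitz fragments (maps γ from a nonempty compact subset of ℝ to X with (1/2)|s−t| ≤ d(γ(s),γ(t)) ≤ 2|s−t|), identified via graphs with a subset of the space H(X) of nonempty compact subsets of ℝ × X with the Hausdorff metric. Then the evaluation relation A(X) := {(x,γ) ∈ X × Γ : ∃ t ∈ Dom(γ), γ(t) = x} is a Borel (indeed closed) subset of X × H(X). -/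
/-!
Both conditions pass to Hausdorff limits. A closed condition on pairs of points of a compact set
survives because every point of the limit set is approximated by points of the approximating sets.
For the evaluation, `x` lies in the projection `π K` of the graph `K` to `X` iff
`infEDist x (π K) = 0`, and this distance is continuous in `(x, K)` because the 1-Lipschitz
projection does not increase Hausdorff distances.
-/

open Set Metric TopologicalSpace

section LipschitzImage

variable {α β : Type*} [PseudoEMetricSpace α] [PseudoEMetricSpace β] {f : α → β}

theorem LipschitzWith.infEDist_image_le (hf : LipschitzWith 1 f) (x : α) (t : Set α) :
    infEDist (f x) (f '' t) ≤ infEDist x t := by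
  simp only [infEDist, iInf_image]
  exact iInf₂_mono fun y _ => by simpa using hf.edist_le_mul x y

theorem LipschitzWith.hausdorffEDist_image_le (hf : LipschitzWith 1 f) (s t : Set α) :
    hausdorffEDist (f '' s) (f '' t) ≤ hausdorffEDist s t := by
  refine hausdorffEDist_le_of_infEDist (forall_mem_image.2 fun x hx => ?_)
    (forall_mem_image.2 fun x hx => ?_)
  · exact (hf.infEDist_image_le x t).trans (infEDist_le_hausdorffEDist_of_mem hx)
  · rw [hausdorffEDist_comm]
    exact (hf.infEDist_image_le x s).trans (infEDist_le_hausdorffEDist_of_mem hx)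

end LipschitzImage

namespace TopologicalSpace.NonemptyCompacts

variable {α β : Type*} [EMetricSpace α] [EMetricSpace β]

theorem lipschitzWith_map {f : α → β} (hf : LipschitzWith 1 f) :
    LipschitzWith 1 (NonemptyCompacts.map f hf.continuous) :=
  .of_edist_le fun s t => hf.hausdorffEDist_image_le s t

theorem isClosed_setOf_mem : IsClosed {p : α × NonemptyCompacts α | p.1 ∈ p.2} := by
  have hzero : {p : α × NonemptyCompacts α | p.1 ∈ p.2} = {p | infEDist p.1 p.2 = 0} := by
    ext p
    exact mem_iff_infEDist_zero_of_closed p.2.isCompact.isClosed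
  rw [hzero]
  exact isClosed_eq (Closeds.continuous_infEDist.comp
    (continuous_id.prodMap isometry_toCloseds.continuous)) continuous_const

theorem isClosed_setOf_mem_image {f : α → β} (hf : LipschitzWith 1 f) :
    IsClosed {p : β × NonemptyCompacts α | p.1 ∈ f '' p.2} :=
  isClosed_setOf_mem.preimage (continuous_fst.prodMk ((lipschitzWith_map hf).continuous.comp
    continuous_snd))

theorem isClosed_setOf_subset {C : Set α} (hC : IsClosed C) :
    IsClosed {K : NonemptyCompacts α | (K : Set α) ⊆ C} := by
  refine isClosed_of_closure_subset fun K hK x hx => hC.closure_subset ?_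
  rw [EMetric.mem_closure_iff] at hK ⊢
  intro ε hε
  obtain ⟨L, hLC, hKL⟩ := hK ε hε
  obtain ⟨y, hy, hxy⟩ := exists_edist_lt_of_hausdorffEDist_lt hx hKL
  exact ⟨y, hLC hy, hxy⟩

theorem isClosed_setOf_forall_mem_forall_mem {P : α → α → Prop}
    (hP : IsClosed {q : α × α | P q.1 q.2}) :
    IsClosed {K : NonemptyCompacts α | ∀ x ∈ K, ∀ y ∈ K, P x y} := by
  have hsq : Continuous fun K : NonemptyCompacts α => (K ×ˢ K : NonemptyCompacts (α × α)) :=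
    (lipschitz_prod (α := α) (β := α)).continuous.comp (continuous_id.prodMk continuous_id)
  simpa only [preimage_ofPred_eq, coe_prod, prod_subset_iff, mem_ofPred_eq, SetLike.mem_coe] using
    (isClosed_setOf_subset hP).preimage hsq

end TopologicalSpace.NonemptyCompacts

theorem stmt_17_general {X : Type*} [MetricSpace X] :
    IsClosed {p : X × TopologicalSpace.NonemptyCompacts (ℝ × X) |
      (∀ q ∈ (p.2 : Set (ℝ × X)), ∀ q' ∈ (p.2 : Set (ℝ × X)),
        (1 / 2) * |q.1 - q'.1| ≤ dist q.2 q'.2 ∧ dist q.2 q'.2 ≤ 2 * |q.1 - q'.1|) ∧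
      ∃ t : ℝ, (t, p.1) ∈ (p.2 : Set (ℝ × X))} := by
  have hbiLip : IsClosed {q : (ℝ × X) × (ℝ × X) | (1 / 2) * |q.1.1 - q.2.1| ≤ dist q.1.2 q.2.2 ∧
      dist q.1.2 q.2.2 ≤ 2 * |q.1.1 - q.2.1|} := by
    rw [ofPred_and]
    exact (isClosed_le (by fun_prop) (by fun_prop)).inter (isClosed_le (by fun_prop) (by fun_prop))
  have hgraph : IsClosed {p : X × NonemptyCompacts (ℝ × X) |
      ∃ t : ℝ, (t, p.1) ∈ (p.2 : Set (ℝ × X))} := by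
    simpa only [mem_image, Prod.exists, exists_and_right, exists_eq_right] using
      NonemptyCompacts.isClosed_setOf_mem_image (α := ℝ × X) LipschitzWith.prod_snd
  exact ((NonemptyCompacts.isClosed_setOf_forall_mem_forall_mem hbiLip).preimage
    continuous_snd).inter hgraph

/-- The evaluation relation `A(X) = {(x,γ) : γ a 2-biLipschitz fragment, x ∈ im γ}`,
with fragments identified with their graphs in the hyperspace of nonempty compact
subsets of `ℝ × X` (Hausdorff metric), is a closed (hence Borel) subset of
`X × H(X)`. -/
theorem stmt_17 {X : Type*} [MetricSpace X] [CompleteSpace X] [SecondCountableTopology X] :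
    IsClosed {p : X × TopologicalSpace.NonemptyCompacts (ℝ × X) |
      (∀ q ∈ (p.2 : Set (ℝ × X)), ∀ q' ∈ (p.2 : Set (ℝ × X)),
        (1 / 2) * |q.1 - q'.1| ≤ dist q.2 q'.2 ∧ dist q.2 q'.2 ≤ 2 * |q.1 - q'.1|) ∧
      ∃ t : ℝ, (t, p.1) ∈ (p.2 : Set (ℝ × X))} :=
  stmt_17_general
end
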